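/- (Grewe) Let P = ∏_{k∈ℤ} P_k be a product probability measure on X = {0,1}^ℤ whose factor measures are uniformly bounded away from 0 and 1 (there is p > 0 with p ≤ P_k(0) ≤ 1 − p for all k ∈ ℤ) and for which the shift T is nonsingular. Then the shift is either conservative or dissipative: either ∑_{n=1}^∞ T^{n'}(x) = ∞ for P-a.e. x, or ∑_{n=1}^∞ T^{n'}(x) < ∞ for P-a.e. x. -/

import Mathlib

open MeasureTheory Filter Topology
open scoped ENNReal

noncomputable section

namespace NSB

/-- The two-sided shift by `n` on `X = {0,1}^ℤ` (with `Bool`: `false` = 0, `true` = 1):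
`(shift n x) k = x (k + n)`.  The shift `T` of the paper is `shift 1`. -/
def shift (n : ℤ) (x : ℤ → Bool) : ℤ → Bool := fun k => x (k + n)

/-- `P` is the product probability measure `∏_{k ∈ ℤ} P_k` on `{0,1}^ℤ` with marginals `p`,
where `p k b` is the probability that coordinate `k` equals `b`. -/
def IsProductMeasure (P : Measure (ℤ → Bool)) (p : ℤ → Bool → ℝ) : Prop :=
  IsProbabilityMeasure P ∧
  (∀ k b, 0 ≤ p k b) ∧ (∀ k, p k false + p k true = 1) ∧
  ∀ (s : Finset ℤ) (y : ℤ → Bool),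
    P {x | ∀ i ∈ s, x i = y i} = ∏ i ∈ s, ENNReal.ofReal (p i (y i))

/-- Half-stationarity (with `p = 1/2`): `P_k(0) = P_k(1) = 1/2` for all `k ≤ 0`. -/
def HalfStationary (p : ℤ → Bool → ℝ) : Prop :=
  ∀ k : ℤ, k ≤ 0 → p k false = 1 / 2

/-- The shift is nonsingular with respect to `P` : `P` and the pushforward of `P`
under the shift are mutually absolutely continuous. -/
def Nonsingular (P : Measure (ℤ → Bool)) : Prop :=
  P ≪ P.map (shift 1) ∧ P.map (shift 1) ≪ P

/-- `rnd P n = T^{n'} = d(P∘Tⁿ)/dP`, where `(P∘Tⁿ)(A) := P(Tⁿ A) = (P.map (shift (-n))) A`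
(the shift is invertible with inverse `shift (-1)`). -/
def rnd (P : Measure (ℤ → Bool)) (n : ℕ) : (ℤ → Bool) → ℝ≥0∞ :=
  (P.map (shift (-(n : ℤ)))).rnDeriv P

/-- Conservativity via Hopf's criterion: `∑_{n ≥ 1} T^{n'}(x) = ∞` for `P`-a.e. `x`. -/
def Conservative (P : Measure (ℤ → Bool)) : Prop :=
  ∀ᵐ x ∂P, ∑' n : ℕ, rnd P (n + 1) x = ⊤

/-- Dissipativity: `∑_{n ≥ 1} T^{n'}(x) < ∞` for `P`-a.e. `x`. -/
def Dissipative (P : Measure (ℤ → Bool)) : Prop :=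
  ∀ᵐ x ∂P, ∑' n : ℕ, rnd P (n + 1) x ≠ ⊤

/-- Ergodicity of the shift with respect to `P`. -/
def ErgodicShift (P : Measure (ℤ → Bool)) : Prop :=
  ∀ A : Set (ℤ → Bool), MeasurableSet A → shift 1 ⁻¹' A = A → P A = 0 ∨ P A = 1

/-- Existence of an absolutely continuous invariant probability:
a probability `ν` with `ν∘T⁻¹ = ν` which is mutually absolutely continuous with `P`. -/
def HasACIP (P : Measure (ℤ → Bool)) : Prop :=
  ∃ ν : Measure (ℤ → Bool),
    IsProbabilityMeasure ν ∧ ν.map (shift 1) = ν ∧ ν ≪ P ∧ P ≪ ν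

/-- The measure `m = e^s ds` on `ℝ`. -/
def expM : Measure ℝ := volume.withDensity fun s => ENNReal.ofReal (Real.exp s)

/-- The Maharam extension `T̃(x,s) = (Tx, s + log T^{1'}(x))` of the shift. -/
def maharam (P : Measure (ℤ → Bool)) : (ℤ → Bool) × ℝ → (ℤ → Bool) × ℝ :=
  fun q => (shift 1 q.1, q.2 + Real.log ((rnd P 1 q.1).toReal))

/-- The inverse of the Maharam extension of the shift. -/
def maharamInv (P : Measure (ℤ → Bool)) : (ℤ → Bool) × ℝ → (ℤ → Bool) × ℝ :=
  fun q => (shift (-1) q.1, q.2 - Real.log ((rnd P 1 (shift (-1) q.1)).toReal))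

/-- The Kakutani–Hellinger distance
`d(P, T_*ⁿP) = ∑_{i ∈ ℤ} [(√P_i(0) − √P_{i−n}(0))² + (√P_i(1) − √P_{i−n}(1))²]`. -/
def dHell (p : ℤ → Bool → ℝ) (n : ℕ) : ℝ :=
  ∑' i : ℤ, ((Real.sqrt (p i false) - Real.sqrt (p (i - (n : ℤ)) false)) ^ 2 +
    (Real.sqrt (p i true) - Real.sqrt (p (i - (n : ℤ)) true)) ^ 2)

/-! ### The one-sided space `X⁺`

`X⁺ = {0,1}^{ℕ ≥ 1}` is realized as `ℕ → Bool`, where the index `i : ℕ` corresponds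
to the coordinate `i + 1` of the paper (so the marginal of index `i` is `P_{i+1}`). -/

/-- `Q` is the product probability measure on `{0,1}^ℕ` with marginals `q`. -/
def IsProductMeasureN (Q : Measure (ℕ → Bool)) (q : ℕ → Bool → ℝ) : Prop :=
  IsProbabilityMeasure Q ∧
  (∀ k b, 0 ≤ q k b) ∧ (∀ k, q k false + q k true = 1) ∧
  ∀ (s : Finset ℕ) (y : ℕ → Bool),
    Q {x | ∀ i ∈ s, x i = y i} = ∏ i ∈ s, ENNReal.ofReal (q i (y i))

/-- The binary odometer (adding machine) `τ`: the first `false` coordinate is turned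
into `true` and all (`true`) coordinates before it are turned into `false`;
on the (a.e. irrelevant) all-`true` sequence we let `τ` be the identity. -/
def odometer (x : ℕ → Bool) : ℕ → Bool :=
  haveI := Classical.propDecidable (∃ n, x n = false)
  if h : ∃ n, x n = false then
    fun i => if i < Nat.find h then false else if i = Nat.find h then true else x i
  else x

/-- The inverse `τ⁻¹` of the binary odometer (defined analogously, a.e. inverse to `τ`). -/
def odometerInv (x : ℕ → Bool) : ℕ → Bool :=
  haveI := Classical.propDecidable (∃ n, x n = true)
  if h : ∃ n, x n = true then
    fun i => if i < Nat.find h then true else if i = Nat.find h then false else x i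
  else x

/-- `rndOdo Q n = d(P⁺∘τⁿ)/dP⁺`, where `(P⁺∘τⁿ)(A) := P⁺(τⁿ A) = (Q.map (τ⁻¹ ^[n])) A`. -/
def rndOdo (Q : Measure (ℕ → Bool)) (n : ℕ) : (ℕ → Bool) → ℝ≥0∞ :=
  (Q.map (odometerInv^[n])).rnDeriv Q

/-- The one-sided shift `σ` on `X⁺`. -/
def oneShift (y : ℕ → Bool) : ℕ → Bool := fun i => y (i + 1)

/-- The Radon–Nikodym derivative of the odometer,
`τ'(x) = (P_{φ(x)}(1)/P_{φ(x)}(0)) · ∏_{k=1}^{φ(x)−1} P_k(0)/P_k(1)`,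
where `φ(x) = min {n ≥ 1 : x_n = 0}` (in our indexing, `φ(x) = Nat.find h + 1`). -/
def tauDeriv (p : ℤ → Bool → ℝ) (x : ℕ → Bool) : ℝ :=
  haveI := Classical.propDecidable (∃ n, x n = false)
  if h : ∃ n, x n = false then
    (p ((Nat.find h : ℤ) + 1) true / p ((Nat.find h : ℤ) + 1) false) *
      ∏ i ∈ Finset.range (Nat.find h), (p ((i : ℤ) + 1) false / p ((i : ℤ) + 1) true)
  else 1

/-- The Maharam extension `τ̃(x,s) = (τx, s + log τ'(x))` of the odometer. -/
def maharamOdo (p : ℤ → Bool → ℝ) : (ℕ → Bool) × ℝ → (ℕ → Bool) × ℝ :=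
  fun q => (odometer q.1, q.2 + Real.log (tauDeriv p q.1))

/-- The function `φ(x) := ∑_{k=1}^∞ log (P_{k−1}(x_k)/P_k(x_k))` (denoted `Phi` here),
defined as the limit of the partial sums (junk value if the series diverges);
in our indexing the `k`-th term is `log (P_i(x_{i+1})/P_{i+1}(x_{i+1}))` with `i = k − 1`. -/
def Phi (p : ℤ → Bool → ℝ) (y : ℕ → Bool) : ℝ :=
  limUnder atTop fun M : ℕ =>
    ∑ i ∈ Finset.range M, Real.log (p (i : ℤ) (y i) / p ((i : ℤ) + 1) (y i))

/-! ### Auxiliary material for the proof of Statement 17 -/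

section Aux

open Function Set

/-- Flip of coordinate `j`. -/
def flipC (j : ℤ) (x : ℤ → Bool) : ℤ → Bool := fun k => if k = j then !(x k) else x k

lemma flipC_flipC (j : ℤ) (x : ℤ → Bool) : flipC j (flipC j x) = x := by
  funext k
  by_cases h : k = j <;> simp [flipC, h]

lemma flipC_comp_self (j : ℤ) : flipC j ∘ flipC j = id := by
  funext x; exact flipC_flipC j x

lemma measurable_flipC (j : ℤ) : Measurable (flipC j) := by
  refine measurable_pi_lambda _ fun k => ?_
  by_cases h : k = j
  · simp only [flipC, if_pos h]
    exact (measurable_of_countable (fun b : Bool => !b)).comp (measurable_pi_apply k)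
  · simp only [flipC, if_neg h]
    exact measurable_pi_apply k

lemma measurable_shift (m : ℤ) : Measurable (shift m) :=
  measurable_pi_lambda _ fun k => measurable_pi_apply _

lemma shift_comp (a b : ℤ) : shift a ∘ shift b = shift (a + b) := by
  funext x k
  simp [shift, add_assoc]

lemma shift_zero : shift 0 = id := by
  funext x k
  simp [shift]

lemma flipC_comp_shift (j m : ℤ) : flipC j ∘ shift m = shift m ∘ flipC (j + m) := by
  funext x k
  by_cases h : k = j
  · simp [flipC, shift, h]
  · have h' : ¬ (k + m = j + m) := fun hc => h (by omega)
    simp [flipC, shift, h, h']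

/-- Pattern cylinder. -/
def Acyl (s : Finset ℤ) (y : ℤ → Bool) : Set (ℤ → Bool) := {x | ∀ i ∈ s, x i = y i}

lemma measurableSet_coord (j : ℤ) (b : Bool) : MeasurableSet {x : ℤ → Bool | x j = b} := by
  have : {x : ℤ → Bool | x j = b} = (fun x : ℤ → Bool => x j) ⁻¹' {b} := by
    ext x; simp
  rw [this]
  exact measurable_pi_apply j (measurableSet_singleton b)

lemma measurableSet_Acyl (s : Finset ℤ) (y : ℤ → Bool) : MeasurableSet (Acyl s y) := by
  have : Acyl s y = ⋂ i ∈ (s : Set ℤ), {x : ℤ → Bool | x i = y i} := by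
    ext x; simp [Acyl]
  rw [this]
  exact (s.finite_toSet).measurableSet_biInter fun i _ => measurableSet_coord i (y i)

lemma Acyl_empty (y : ℤ → Bool) : Acyl ∅ y = Set.univ := by
  ext x; simp [Acyl]

lemma Acyl_insert (j : ℤ) (s : Finset ℤ) (y : ℤ → Bool) :
    Acyl (insert j s) y = Acyl s y ∩ {x | x j = y j} := by
  ext x
  simp only [Acyl, Set.mem_inter_iff, Set.mem_setOf_eq, Finset.forall_mem_insert]
  exact and_comm

lemma Acyl_update_not_mem {j : ℤ} {s : Finset ℤ} (hj : j ∉ s) (y : ℤ → Bool) (b : Bool) :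
    Acyl s (Function.update y j b) = Acyl s y := by
  ext x
  simp only [Acyl, Set.mem_setOf_eq]
  constructor <;> intro h i hi <;> have hij : i ≠ j := fun hc => hj (hc ▸ hi)
  · have := h i hi; rwa [Function.update_of_ne hij] at this
  · rw [Function.update_of_ne hij]; exact h i hi

lemma flipC_apply_self (j : ℤ) (x : ℤ → Bool) : flipC j x j = !(x j) := by simp [flipC]

lemma flipC_apply_ne {k j : ℤ} (h : k ≠ j) (x : ℤ → Bool) : flipC j x k = x k := by
  simp [flipC, h]

lemma flipC_preimage_Acyl (j : ℤ) (s : Finset ℤ) (y : ℤ → Bool) :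
    flipC j ⁻¹' Acyl s y = Acyl s (Function.update y j (!(y j))) := by
  ext x
  simp only [Set.mem_preimage, Acyl, Set.mem_setOf_eq]
  constructor <;> intro h i hi
  · by_cases hij : i = j
    · subst hij
      have := h i hi
      rw [flipC_apply_self] at this
      rw [Function.update_self, ← this, Bool.not_not]
    · rw [Function.update_of_ne hij]
      have := h i hi
      rwa [flipC_apply_ne hij] at this
  · by_cases hij : i = j
    · subst hij
      have := h i hi
      rw [Function.update_self] at this
      rw [flipC_apply_self, this, Bool.not_not]
    · have := h i hi
      rw [Function.update_of_ne hij] at this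
      rwa [flipC_apply_ne hij]

lemma Acyl_inter_self {j : ℤ} {s : Finset ℤ} (hj : j ∈ s) (y : ℤ → Bool) :
    Acyl s y ∩ {x | x j = y j} = Acyl s y := by
  apply Set.inter_eq_self_of_subset_left
  intro x hx
  exact hx j hj

lemma Acyl_inter_ne {j : ℤ} {s : Finset ℤ} (hj : j ∈ s) {y : ℤ → Bool} {b : Bool}
    (hb : b ≠ y j) : Acyl s y ∩ {x | x j = b} = ∅ := by
  ext x
  simp only [Set.mem_inter_iff, Set.mem_setOf_eq, Set.mem_empty_iff_false, iff_false, not_and]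
  intro hx hxb
  exact hb (hxb ▸ (hx j hj).symm ▸ rfl)

/-- The density of the flip of coordinate `j`. -/
def densF (p : ℤ → Bool → ℝ) (j : ℤ) (x : ℤ → Bool) : ℝ≥0∞ :=
  ENNReal.ofReal (p j (!(x j)) / p j (x j))

lemma measurable_densF (p : ℤ → Bool → ℝ) (j : ℤ) : Measurable (densF p j) :=
  (measurable_of_countable (fun b : Bool => ENNReal.ofReal (p j (!b) / p j b))).comp
    (measurable_pi_apply j)

/-- Two finite measures agreeing on all pattern cylinders agree. -/
lemma ext_pattern (μ ν : Measure (ℤ → Bool)) [IsFiniteMeasure μ] [IsFiniteMeasure ν]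
    (h : ∀ (s : Finset ℤ) (y : ℤ → Bool), μ (Acyl s y) = ν (Acyl s y)) : μ = ν := by
  classical
  refine ext_of_generate_finite (measurableCylinders (fun _ : ℤ => Bool))
    generateFrom_measurableCylinders.symm isPiSystem_measurableCylinders (fun t ht => ?_)
    (by simpa [Acyl_empty] using h ∅ (fun _ => false))
  obtain ⟨s, S, _, rfl⟩ := (mem_measurableCylinders t).1 ht
  set yz : ((i : s) → Bool) → (ℤ → Bool) :=
    fun z i => if hi : i ∈ s then z ⟨i, hi⟩ else false with hyz
  have hcyl : cylinder s S = ⋃ z ∈ (Set.toFinite S).toFinset, Acyl s (yz z) := by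
    ext x
    simp only [mem_cylinder, Set.mem_iUnion, Set.Finite.mem_toFinset, exists_prop]
    constructor
    · intro hx
      refine ⟨s.restrict x, hx, fun i hi => ?_⟩
      simp [hyz, hi, Finset.restrict]
    · rintro ⟨z, hz, hxz⟩
      have : s.restrict x = z := by
        funext i
        have := hxz i i.2
        simpa [hyz, Finset.restrict, i.2] using this
      rwa [this]
  have hd : (↑(Set.toFinite S).toFinset : Set ((i : s) → Bool)).PairwiseDisjoint
      (fun z => Acyl s (yz z)) := by
    intro z _ z' _ hne
    refine Set.disjoint_left.2 fun x hx hx' => hne ?_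
    funext i
    have h1 := hx i i.2
    have h2 := hx' i i.2
    simp only [hyz, i.2, dif_pos] at h1 h2
    rw [← h1, ← h2]
  have hm : ∀ z ∈ (Set.toFinite S).toFinset, MeasurableSet (Acyl s (yz z)) :=
    fun z _ => measurableSet_Acyl s (yz z)
  rw [hcyl, measure_biUnion_finset hd hm, measure_biUnion_finset hd hm]
  exact Finset.sum_congr rfl fun z _ => h s (yz z)

/-- Splitting a set-lintegral of the flip density by the value of coordinate `j`. -/
lemma withDensity_densF_apply (P : Measure (ℤ → Bool)) (p : ℤ → Bool → ℝ) (j : ℤ)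
    {S : Set (ℤ → Bool)} (hS : MeasurableSet S) :
    P.withDensity (densF p j) S
      = ENNReal.ofReal (p j true / p j false) * P (S ∩ {x | x j = false})
        + ENNReal.ofReal (p j false / p j true) * P (S ∩ {x | x j = true}) := by
  rw [withDensity_apply _ hS]
  have hsplit : S = (S ∩ {x | x j = false}) ∪ (S ∩ {x | x j = true}) := by
    ext x
    by_cases h : x j = false
    · simp [h]
    · have : x j = true := by revert h; cases x j <;> simp
      simp [this]
  have hdisj : Disjoint (S ∩ {x | x j = false}) (S ∩ {x | x j = true}) := by
    refine Set.disjoint_left.2 fun x hx hx' => ?_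
    have h1 := hx.2; have h2 := hx'.2
    simp only [Set.mem_setOf_eq] at h1 h2
    rw [h1] at h2; exact Bool.noConfusion h2
  nth_rewrite 1 [hsplit]
  rw [lintegral_union (hS.inter (measurableSet_coord j true)) hdisj]
  have e1 : ∫⁻ x in S ∩ {x | x j = false}, densF p j x ∂P
      = ENNReal.ofReal (p j true / p j false) * P (S ∩ {x | x j = false}) := by
    rw [setLIntegral_congr_fun (hS.inter (measurableSet_coord j false))
      (fun x hx => ?_), setLIntegral_const]
    have hxj : x j = false := hx.2
    simp [densF, hxj]
  have e2 : ∫⁻ x in S ∩ {x | x j = true}, densF p j x ∂P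
      = ENNReal.ofReal (p j false / p j true) * P (S ∩ {x | x j = true}) := by
    rw [setLIntegral_congr_fun (hS.inter (measurableSet_coord j true))
      (fun x hx => ?_), setLIntegral_const]
    have hxj : x j = true := hx.2
    simp [densF, hxj]
  rw [e1, e2]

lemma prob_Acyl {P : Measure (ℤ → Bool)} {p : ℤ → Bool → ℝ} (hP : IsProductMeasure P p)
    (s : Finset ℤ) (y : ℤ → Bool) :
    P (Acyl s y) = ∏ i ∈ s, ENNReal.ofReal (p i (y i)) := hP.2.2.2 s y

/-- The pushforward of the product measure under a coordinate flip has density `densF`. -/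
lemma map_flipC {P : Measure (ℤ → Bool)} {p : ℤ → Bool → ℝ} (hP : IsProductMeasure P p)
    (hpos : ∀ k b, 0 < p k b) {M : ℝ≥0∞} (hM : M ≠ ⊤) (j : ℤ)
    (hub : ∀ x, densF p j x ≤ M) :
    P.map (flipC j) = P.withDensity (densF p j) := by
  classical
  haveI : IsProbabilityMeasure P := hP.1
  haveI : IsProbabilityMeasure (P.map (flipC j)) :=
    Measure.isProbabilityMeasure_map (measurable_flipC j).aemeasurable
  haveI : IsFiniteMeasure (P.withDensity (densF p j)) := by
    constructor
    rw [withDensity_apply _ MeasurableSet.univ]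
    calc ∫⁻ x in Set.univ, densF p j x ∂P ≤ ∫⁻ _ in Set.univ, M ∂P :=
        setLIntegral_mono' MeasurableSet.univ (fun x _ => hub x)
      _ = M := by simp
      _ < ⊤ := hM.lt_top
  refine ext_pattern _ _ (fun s y => ?_)
  rw [Measure.map_apply (measurable_flipC j) (measurableSet_Acyl s y),
    flipC_preimage_Acyl, withDensity_densF_apply P p j (measurableSet_Acyl s y),
    prob_Acyl hP]
  by_cases hj : j ∈ s
  · obtain ⟨s', hjs', rfl⟩ : ∃ s', j ∉ s' ∧ s = insert j s' :=
      ⟨s.erase j, s.notMem_erase j, (Finset.insert_erase hj).symm⟩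
    rw [Finset.prod_insert hjs', Function.update_self]
    have hprod' : ∏ i ∈ s', ENNReal.ofReal (p i (Function.update y j (!(y j)) i))
        = ∏ i ∈ s', ENNReal.ofReal (p i (y i)) :=
      Finset.prod_congr rfl fun i hi => by
        rw [Function.update_of_ne (fun hc => hjs' (by rwa [hc] at hi))]
    rw [hprod']
    cases hyj : y j with
    | false =>
      have hself : Acyl (insert j s') y ∩ {x | x j = false} = Acyl (insert j s') y := by
        have h := Acyl_inter_self (s := insert j s') hj y
        rwa [hyj] at h
      have hne : Acyl (insert j s') y ∩ {x | x j = true} = ∅ :=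
        Acyl_inter_ne hj (by simp [hyj])
      rw [hself, hne, measure_empty, mul_zero, add_zero, prob_Acyl hP,
        Finset.prod_insert hjs', hyj, ← mul_assoc,
        ← ENNReal.ofReal_mul (le_of_lt (div_pos (hpos j true) (hpos j false))),
        div_mul_cancel₀ _ (ne_of_gt (hpos j false))]
      norm_num
    | true =>
      have hself : Acyl (insert j s') y ∩ {x | x j = true} = Acyl (insert j s') y := by
        have h := Acyl_inter_self (s := insert j s') hj y
        rwa [hyj] at h
      have hne : Acyl (insert j s') y ∩ {x | x j = false} = ∅ :=
        Acyl_inter_ne hj (by simp [hyj])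
      rw [hself, hne, measure_empty, mul_zero, zero_add, prob_Acyl hP,
        Finset.prod_insert hjs', hyj, ← mul_assoc,
        ← ENNReal.ofReal_mul (le_of_lt (div_pos (hpos j false) (hpos j true))),
        div_mul_cancel₀ _ (ne_of_gt (hpos j true))]
      norm_num
  · have hprodf : ∀ b : Bool, ∏ i ∈ s, ENNReal.ofReal (p i (Function.update y j b i))
        = ∏ i ∈ s, ENNReal.ofReal (p i (y i)) := fun b =>
      Finset.prod_congr rfl fun i hi => by
        rw [Function.update_of_ne (fun hc => hj (by rwa [hc] at hi))]
    rw [hprodf]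
    have h1 : Acyl s y ∩ {x | x j = false} = Acyl (insert j s) (Function.update y j false) := by
      rw [Acyl_insert, Acyl_update_not_mem hj, Function.update_self]
    have h2 : Acyl s y ∩ {x | x j = true} = Acyl (insert j s) (Function.update y j true) := by
      rw [Acyl_insert, Acyl_update_not_mem hj, Function.update_self]
    rw [h1, h2, prob_Acyl hP, prob_Acyl hP, Finset.prod_insert hj, Finset.prod_insert hj,
      Function.update_self, Function.update_self, hprodf, hprodf, ← mul_assoc, ← mul_assoc,
      ← ENNReal.ofReal_mul (le_of_lt (div_pos (hpos j true) (hpos j false))),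
      ← ENNReal.ofReal_mul (le_of_lt (div_pos (hpos j false) (hpos j true))),
      div_mul_cancel₀ _ (ne_of_gt (hpos j false)), div_mul_cancel₀ _ (ne_of_gt (hpos j true)),
      ← add_mul, ← ENNReal.ofReal_add (le_of_lt (hpos j true)) (le_of_lt (hpos j false))]
    have hone : p j true + p j false = 1 := by
      have := hP.2.2.1 j; linarith
    rw [hone, ENNReal.ofReal_one, one_mul]

/-- Nonsingularity of the shift propagates to all powers. -/
lemma ac_iter {P : Measure (ℤ → Bool)} (hns : Nonsingular P) (n : ℕ) :
    P ≪ P.map (shift (-(n : ℤ))) ∧ P.map (shift (-(n : ℤ))) ≪ P := by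
  have hm1 : Measurable (shift (-1)) := measurable_shift _
  have hmap0 : (P.map (shift 1)).map (shift (-1)) = P := by
    rw [Measure.map_map hm1 (measurable_shift 1), shift_comp]
    norm_num [shift_zero, Measure.map_id]
  have hs1 : P ≪ P.map (shift (-1)) := by
    have h := (hns.2).map hm1
    rwa [hmap0] at h
  have hs2 : P.map (shift (-1)) ≪ P := by
    have h := (hns.1).map hm1
    rwa [hmap0] at h
  induction n with
  | zero =>
    simp only [Nat.cast_zero, neg_zero, shift_zero, Measure.map_id]
    exact ⟨Measure.AbsolutelyContinuous.rfl, Measure.AbsolutelyContinuous.rfl⟩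
  | succ n ih =>
    have harg : (-((n + 1 : ℕ) : ℤ)) = (-1) + (-(n : ℤ)) := by push_cast; ring
    have hcomp : P.map (shift (-((n + 1 : ℕ) : ℤ))) = (P.map (shift (-(n : ℤ)))).map (shift (-1)) := by
      rw [Measure.map_map hm1 (measurable_shift _), shift_comp, harg]
    constructor
    · rw [hcomp]; exact hs1.trans (ih.1.map hm1)
    · rw [hcomp]; exact (ih.2.map hm1).trans hs2

lemma rnDeriv_mono_ac {μ₁ μ₂ ν : Measure (ℤ → Bool)} [IsFiniteMeasure μ₁] [IsFiniteMeasure μ₂]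
    [SigmaFinite ν] (hle : μ₁ ≤ μ₂) (hac : μ₂ ≪ ν) :
    μ₁.rnDeriv ν ≤ᵐ[ν] μ₂.rnDeriv ν := by
  refine ae_le_of_forall_setLIntegral_le_of_sigmaFinite (Measure.measurable_rnDeriv _ _)
    fun s hs _ => ?_
  calc ∫⁻ x in s, μ₁.rnDeriv ν x ∂ν ≤ μ₁ s := Measure.setLIntegral_rnDeriv_le s
    _ ≤ μ₂ s := Measure.le_iff'.1 hle s
    _ = ∫⁻ x in s, μ₂.rnDeriv ν x ∂ν := (Measure.setLIntegral_rnDeriv' hac hs).symm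

/-- Key comparison: the Radon–Nikodym derivatives change by a uniformly bounded factor
under a coordinate flip. -/
lemma key_bound {P : Measure (ℤ → Bool)} {p : ℤ → Bool → ℝ} (hP : IsProductMeasure P p)
    (hns : Nonsingular P) {c C : ℝ≥0∞} (hc0 : c ≠ 0) (hcT : c ≠ ⊤) (hCT : C ≠ ⊤)
    (hlb : ∀ i x, c ≤ densF p i x) (hub : ∀ i x, densF p i x ≤ C)
    (hmapflip : ∀ i, P.map (flipC i) = P.withDensity (densF p i))
    (j : ℤ) (n : ℕ) :
    ∀ᵐ x ∂P, rnd P n (flipC j x) ≤ (C * c⁻¹) * rnd P n x := by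
  classical
  haveI : IsProbabilityMeasure P := hP.1
  set F := flipC j with hF
  have hFm : Measurable F := measurable_flipC j
  set μn : Measure (ℤ → Bool) := P.map (shift (-(n : ℤ))) with hμn
  haveI : IsProbabilityMeasure μn :=
    Measure.isProbabilityMeasure_map (measurable_shift _).aemeasurable
  haveI : IsProbabilityMeasure (μn.map F) := Measure.isProbabilityMeasure_map hFm.aemeasurable
  haveI : IsProbabilityMeasure (P.map F) := Measure.isProbabilityMeasure_map hFm.aemeasurable
  have hFemb : MeasurableEmbedding F :=
    (⟨⟨F, F, flipC_flipC j, flipC_flipC j⟩, hFm, hFm⟩ :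
      (ℤ → Bool) ≃ᵐ (ℤ → Bool)).measurableEmbedding
  have hmapF : P.map F = P.withDensity (densF p j) := hmapflip j
  have hsmul : (c • P) ≤ P.map F := by
    rw [hmapF, ← withDensity_const]
    exact withDensity_mono (ae_of_all _ (fun x => hlb j x))
  have hPacF : P ≪ P.map F := by
    intro A hA
    have h0 : (c • P) A = 0 :=
      le_antisymm (le_trans (Measure.le_iff'.1 hsmul A) hA.le) zero_le
    rw [Measure.smul_apply, smul_eq_mul] at h0
    exact (mul_eq_zero.mp h0).resolve_left hc0
  have hacn : μn ≪ P := (ac_iter hns n).2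
  have e1 : (μn.map F).map F = μn := by
    rw [Measure.map_map hFm hFm, hF, flipC_comp_self, Measure.map_id]
  have e2 : (P.map F).map F = P := by
    rw [Measure.map_map hFm hFm, hF, flipC_comp_self, Measure.map_id]
  have h1 : (fun x => μn.rnDeriv P (F x)) =ᵐ[P] (μn.map F).rnDeriv (P.map F) := by
    have h := hFemb.rnDeriv_map (μn.map F) (P.map F)
    rw [e1, e2] at h
    exact h.filter_mono hPacF.ae_le
  have h2 : (μn.map F).rnDeriv (P.map F) * (P.map F).rnDeriv P =ᵐ[P] (μn.map F).rnDeriv P :=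
    Measure.rnDeriv_mul_rnDeriv (hacn.map hFm)
  have h3 : (P.map F).rnDeriv P =ᵐ[P] densF p j := by
    rw [hmapF]
    exact Measure.rnDeriv_withDensity P (measurable_densF p j)
  have hle : μn.map F ≤ C • μn := by
    have e3 : μn.map F = (P.withDensity (densF p (j + -(n : ℤ)))).map (shift (-(n : ℤ))) := by
      rw [hμn, Measure.map_map hFm (measurable_shift _), hF, flipC_comp_shift,
        ← Measure.map_map (measurable_shift _) (measurable_flipC _), hmapflip]
    rw [e3, hμn]
    calc (P.withDensity (densF p (j + -(n : ℤ)))).map (shift (-(n : ℤ)))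
        ≤ (C • P).map (shift (-(n : ℤ))) := by
          refine Measure.map_mono ?_ (measurable_shift _)
          rw [← withDensity_const]
          exact withDensity_mono (ae_of_all _ (fun x => hub _ x))
      _ = C • (P.map (shift (-(n : ℤ)))) := Measure.map_smul C P _
  haveI : IsFiniteMeasure (C • μn) := by
    constructor
    rw [Measure.smul_apply, smul_eq_mul]
    exact ENNReal.mul_lt_top hCT.lt_top (measure_lt_top _ _)
  have h4 : (μn.map F).rnDeriv P ≤ᵐ[P] (C • μn).rnDeriv P := by
    refine rnDeriv_mono_ac hle ?_
    intro A hA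
    rw [Measure.smul_apply, smul_eq_mul, hacn hA, mul_zero]
  have h5 : (C • μn).rnDeriv P =ᵐ[P] C • μn.rnDeriv P :=
    Measure.rnDeriv_smul_left_of_ne_top' μn P hCT
  show ∀ᵐ x ∂P, μn.rnDeriv P (F x) ≤ (C * c⁻¹) * μn.rnDeriv P x
  filter_upwards [h1, h2, h3, h4, h5] with x hx1 hx2 hx3 hx4 hx5
  have hx2' : (μn.map F).rnDeriv (P.map F) x * (P.map F).rnDeriv P x
      = (μn.map F).rnDeriv P x := hx2
  have hx5' : (C • μn).rnDeriv P x = C * μn.rnDeriv P x := by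
    rw [hx5]; simp [smul_eq_mul]
  calc μn.rnDeriv P (F x) = (μn.map F).rnDeriv (P.map F) x := hx1
    _ = ((μn.map F).rnDeriv (P.map F) x * c) * c⁻¹ := by
        rw [mul_assoc, ENNReal.mul_inv_cancel hc0 hcT, mul_one]
    _ ≤ ((μn.map F).rnDeriv (P.map F) x * densF p j x) * c⁻¹ :=
        mul_le_mul_left (mul_le_mul_right (hlb j x) _) _
    _ = ((μn.map F).rnDeriv (P.map F) x * (P.map F).rnDeriv P x) * c⁻¹ := by rw [hx3]
    _ = (μn.map F).rnDeriv P x * c⁻¹ := by rw [hx2']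
    _ ≤ (C • μn).rnDeriv P x * c⁻¹ := mul_le_mul_left hx4 _
    _ = (C * μn.rnDeriv P x) * c⁻¹ := by rw [hx5']
    _ = (C * c⁻¹) * μn.rnDeriv P x := by ring

end Aux

/-- **Grewe.** If the factor measures of a nonsingular product measure on
`{0,1}^ℤ` are uniformly bounded away from `0` and `1`, then the shift is either conservative
or dissipative. -/
theorem conservative_or_dissipative (P : Measure (ℤ → Bool)) (p : ℤ → Bool → ℝ)
    (hP : IsProductMeasure P p)
    (hbd : ∃ q : ℝ, 0 < q ∧ ∀ k : ℤ, q ≤ p k false ∧ p k false ≤ 1 - q)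
    (hns : Nonsingular P) :
    Conservative P ∨ Dissipative P := by
  classical
  obtain ⟨q, hq0, hq⟩ := hbd
  haveI hprob : IsProbabilityMeasure P := hP.1
  have hsum : ∀ k, p k false + p k true = 1 := hP.2.2.1
  have hq1 : q ≤ 1 - q := le_trans (hq 0).1 (hq 0).2
  have h1q : 0 < 1 - q := lt_of_lt_of_le hq0 hq1
  have hpb : ∀ k b, q ≤ p k b ∧ p k b ≤ 1 - q := by
    intro k b
    cases b
    · exact hq k
    · have h := hq k
      have h2 := hsum k
      constructor <;> [linarith [h.2]; linarith [h.1]]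
  have hpos : ∀ k b, 0 < p k b := fun k b => lt_of_lt_of_le hq0 (hpb k b).1
  set c : ℝ≥0∞ := ENNReal.ofReal (q / (1 - q)) with hc
  set C : ℝ≥0∞ := ENNReal.ofReal ((1 - q) / q) with hCdef
  have hc0 : c ≠ 0 := by
    rw [hc]
    simp only [ne_eq, ENNReal.ofReal_eq_zero, not_le]
    positivity
  have hcT : c ≠ ⊤ := ENNReal.ofReal_ne_top
  have hCT : C ≠ ⊤ := ENNReal.ofReal_ne_top
  have hlb : ∀ i x, c ≤ densF p i x := by
    intro i x
    rw [hc]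
    exact ENNReal.ofReal_le_ofReal
      (div_le_div₀ (le_of_lt (hpos i _)) (hpb i _).1 (hpos i _) (hpb i _).2)
  have hub : ∀ i x, densF p i x ≤ C := by
    intro i x
    rw [hCdef]
    exact ENNReal.ofReal_le_ofReal
      (div_le_div₀ (le_of_lt h1q) (hpb i _).2 hq0 (hpb i _).1)
  have hmapflip : ∀ i, P.map (flipC i) = P.withDensity (densF p i) :=
    fun i => map_flipC hP hpos hCT i (hub i)
  set K : ℝ≥0∞ := C * c⁻¹ with hK
  have hKT : K ≠ ⊤ := ENNReal.mul_ne_top hCT (ENNReal.inv_ne_top.2 hc0)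
  set Efun : (ℤ → Bool) → ℝ≥0∞ := fun x => ∑' m : ℕ, rnd P (m + 1) x with hEfun
  have hEfunMeas : Measurable Efun :=
    Measurable.ennreal_tsum fun m => Measure.measurable_rnDeriv _ _
  set E : Set (ℤ → Bool) := Efun ⁻¹' {⊤} with hEdef
  have hEmeas : MeasurableSet E := hEfunMeas (measurableSet_singleton ⊤)
  have hmemE : ∀ x, x ∈ E ↔ Efun x = ⊤ := fun x => Iff.rfl
  -- Step 1: a.e. comparison of the Hopf sums under coordinate flips.
  have hstep : ∀ j : ℤ, ∀ᵐ x ∂P, Efun (flipC j x) ≤ K * Efun x := by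
    intro j
    have h := ae_all_iff.2 (fun m : ℕ =>
      key_bound hP hns hc0 hcT hCT hlb hub hmapflip j (m + 1))
    filter_upwards [h] with x hx
    calc Efun (flipC j x) = ∑' m : ℕ, rnd P (m + 1) (flipC j x) := rfl
      _ ≤ ∑' m : ℕ, K * rnd P (m + 1) x := ENNReal.tsum_le_tsum (fun m => hx m)
      _ = K * Efun x := ENNReal.tsum_mul_left
  have hstep2 : ∀ j : ℤ, ∀ᵐ x ∂P, Efun x ≤ K * Efun (flipC j x) := by
    intro j
    have hgoodc : MeasurableSet {x | ¬ (Efun (flipC j x) ≤ K * Efun x)} :=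
      (measurableSet_le (hEfunMeas.comp (measurable_flipC j)) (hEfunMeas.const_mul K)).compl
    have h0 : P {x | ¬ (Efun (flipC j x) ≤ K * Efun x)} = 0 := by
      have h := hstep j
      rwa [ae_iff] at h
    have hpre : P (flipC j ⁻¹' {x | ¬ (Efun (flipC j x) ≤ K * Efun x)}) = 0 := by
      have h1 : P.map (flipC j) {x | ¬ (Efun (flipC j x) ≤ K * Efun x)} = 0 := by
        rw [hmapflip j]
        exact withDensity_absolutelyContinuous P _ h0
      rwa [Measure.map_apply (measurable_flipC j) hgoodc] at h1
    have hae : ∀ᵐ x ∂P, Efun (flipC j (flipC j x)) ≤ K * Efun (flipC j x) := by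
      rw [ae_iff]
      exact hpre
    filter_upwards [hae] with x hx
    rwa [flipC_flipC] at hx
  -- Step 2: a.e. invariance of `E` under coordinate flips.
  have hinv : ∀ j : ℤ, ∀ᵐ x ∂P, (x ∈ E ↔ flipC j x ∈ E) := by
    intro j
    filter_upwards [hstep j, hstep2 j] with x h1 h2
    rw [hmemE, hmemE]
    constructor
    · intro hx
      by_contra hne
      rw [hx] at h2
      exact (ENNReal.mul_ne_top hKT hne) (top_le_iff.1 h2)
    · intro hx
      by_contra hne
      rw [hx] at h1
      exact (ENNReal.mul_ne_top hKT hne) (top_le_iff.1 h1)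
  -- Step 3: `E` is independent of every pattern cylinder.
  have hprodE : ∀ (s : Finset ℤ) (y : ℤ → Bool),
      P (E ∩ Acyl s y) = P E * ∏ i ∈ s, ENNReal.ofReal (p i (y i)) := by
    intro s
    induction s using Finset.induction_on with
    | empty => intro y; simp [Acyl_empty]
    | @insert j s hj ih =>
      intro y
      set α : ℝ≥0∞ := ENNReal.ofReal (p j (y j)) with hα
      set β : ℝ≥0∞ := ENNReal.ofReal (p j (!(y j))) with hβ
      set γ : ℝ≥0∞ := ENNReal.ofReal (p j (y j) / p j (!(y j))) with hγ
      set y' : ℤ → Bool := Function.update y j (!(y j)) with hy'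
      have hAy' : Acyl (insert j s) y' = Acyl s y ∩ {x | x j = !(y j)} := by
        rw [Acyl_insert, hy', Acyl_update_not_mem hj, Function.update_self]
      have hmeasE' : MeasurableSet (E ∩ Acyl (insert j s) y') :=
        hEmeas.inter (measurableSet_Acyl _ _)
      have hEae : (E : Set (ℤ → Bool)) =ᵐ[P] flipC j ⁻¹' E := by
        rw [eventuallyEq_set]
        filter_upwards [hinv j] with x hx
        exact hx
      have hupd : Function.update y' j (!(y' j)) = y := by
        funext i
        by_cases hij : i = j
        · subst hij
          rw [Function.update_self, hy', Function.update_self, Bool.not_not]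
        · rw [Function.update_of_ne hij, hy', Function.update_of_ne hij]
      have hpre2 : flipC j ⁻¹' (E ∩ Acyl (insert j s) y')
          = (flipC j ⁻¹' E) ∩ Acyl (insert j s) y := by
        rw [Set.preimage_inter, flipC_preimage_Acyl, hupd]
      have hflip : P (E ∩ Acyl (insert j s) y) = γ * P (E ∩ Acyl (insert j s) y') := by
        have step1 : P (E ∩ Acyl (insert j s) y)
            = P ((flipC j ⁻¹' E) ∩ Acyl (insert j s) y) :=
          measure_congr (hEae.inter (Filter.EventuallyEq.refl _ _))
        have step2 : P ((flipC j ⁻¹' E) ∩ Acyl (insert j s) y)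
            = P.map (flipC j) (E ∩ Acyl (insert j s) y') := by
          rw [Measure.map_apply (measurable_flipC j) hmeasE', hpre2]
        have hconst : ∫⁻ x in E ∩ Acyl (insert j s) y', densF p j x ∂P
            = γ * P (E ∩ Acyl (insert j s) y') := by
          have hfun : ∀ᵐ x ∂P, x ∈ E ∩ Acyl (insert j s) y' → densF p j x = γ := by
            refine ae_of_all _ (fun x hx => ?_)
            have hxj : x j = !(y j) := by
              have h2 := hx.2 j (Finset.mem_insert_self j s)
              rwa [hy', Function.update_self] at h2
            simp [densF, hxj, hγ, Bool.not_not]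
          rw [setLIntegral_congr_fun_ae hmeasE' hfun, setLIntegral_const]
        rw [step1, step2, hmapflip j, withDensity_apply _ hmeasE', hconst]
      have hmeas2 : MeasurableSet (E ∩ (Acyl s y ∩ {x | x j = !(y j)})) :=
        hEmeas.inter ((measurableSet_Acyl s y).inter (measurableSet_coord j _))
      have hadd : P (E ∩ Acyl (insert j s) y) + P (E ∩ Acyl (insert j s) y')
          = P (E ∩ Acyl s y) := by
        rw [Acyl_insert, hAy']
        have hdisj : Disjoint (E ∩ (Acyl s y ∩ {x | x j = y j}))
            (E ∩ (Acyl s y ∩ {x | x j = !(y j)})) := by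
          refine Set.disjoint_left.2 fun x hx hx' => ?_
          have h1 := hx.2.2
          have h2 := hx'.2.2
          simp only [Set.mem_setOf_eq] at h1 h2
          rw [h1] at h2
          simp at h2
        have hunion : (E ∩ (Acyl s y ∩ {x | x j = y j}))
            ∪ (E ∩ (Acyl s y ∩ {x | x j = !(y j)})) = E ∩ Acyl s y := by
          rw [← Set.inter_union_distrib_left]
          congr 1
          ext x
          simp only [Set.mem_union, Set.mem_inter_iff, Set.mem_setOf_eq]
          constructor
          · rintro (⟨h, _⟩ | ⟨h, _⟩) <;> exact h
          · intro h
            by_cases hb : x j = y j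
            · exact Or.inl ⟨h, hb⟩
            · refine Or.inr ⟨h, ?_⟩
              cases hxy : x j <;> cases hyy : y j <;> simp_all
        rw [← measure_union hdisj hmeas2, hunion]
      have hβγ : β * γ = α := by
        rw [hβ, hγ, hα, ← ENNReal.ofReal_mul (le_of_lt (hpos j (!(y j)))), mul_comm,
          div_mul_cancel₀ _ (ne_of_gt (hpos j (!(y j))))]
      have hαβ : α + β = 1 := by
        rw [hα, hβ, ← ENNReal.ofReal_add (le_of_lt (hpos j (y j))) (le_of_lt (hpos j (!(y j))))]
        have h1 : p j (y j) + p j (!(y j)) = 1 := by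
          cases y j
          · simpa using hsum j
          · have := hsum j
            simp only [Bool.not_true]
            linarith
        rw [h1, ENNReal.ofReal_one]
      have ha : P (E ∩ Acyl (insert j s) y) = α * P (E ∩ Acyl s y) := by
        calc P (E ∩ Acyl (insert j s) y)
            = 1 * P (E ∩ Acyl (insert j s) y) := (one_mul _).symm
          _ = (α + β) * P (E ∩ Acyl (insert j s) y) := by rw [hαβ]
          _ = α * P (E ∩ Acyl (insert j s) y) + β * (γ * P (E ∩ Acyl (insert j s) y')) := by
              rw [add_mul, hflip]
          _ = α * P (E ∩ Acyl (insert j s) y) + α * P (E ∩ Acyl (insert j s) y') := by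
              rw [← mul_assoc, hβγ]
          _ = α * (P (E ∩ Acyl (insert j s) y) + P (E ∩ Acyl (insert j s) y')) := by ring
          _ = α * P (E ∩ Acyl s y) := by rw [hadd]
      rw [ha, ih y, Finset.prod_insert hj, hα]
      ring
  -- Step 4: zero-one law.
  haveI : IsFiniteMeasure ((P E) • P) := by
    constructor
    rw [Measure.smul_apply, smul_eq_mul]
    exact ENNReal.mul_lt_top (measure_lt_top _ _) (measure_lt_top _ _)
  have hext : P.restrict E = (P E) • P := by
    refine ext_pattern _ _ (fun s y => ?_)
    rw [Measure.restrict_apply (measurableSet_Acyl s y), Set.inter_comm, hprodE s y,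
      Measure.smul_apply, smul_eq_mul, prob_Acyl hP]
  have hPE : P E * P E = P E := by
    have h := congrArg (fun μ : Measure (ℤ → Bool) => μ E) hext
    simp only [Measure.restrict_apply hEmeas, Set.inter_self, Measure.smul_apply,
      smul_eq_mul] at h
    exact h.symm
  rcases eq_or_ne (P E) 0 with h0 | hne
  · right
    show ∀ᵐ x ∂P, ∑' n : ℕ, rnd P (n + 1) x ≠ ⊤
    rw [ae_iff]
    have hset : {x | ¬ (∑' m : ℕ, rnd P (m + 1) x ≠ ⊤)} = E := by
      ext x
      simp [hEdef, hEfun]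
    rw [hset]
    exact h0
  · left
    have hE1 : P E = 1 := (ENNReal.mul_eq_right hne (measure_ne_top _ _)).1 hPE
    show ∀ᵐ x ∂P, ∑' n : ℕ, rnd P (n + 1) x = ⊤
    rw [ae_iff]
    have hset : {x | ¬ (∑' m : ℕ, rnd P (m + 1) x = ⊤)} = Eᶜ := by
      ext x
      simp [hEdef, hEfun]
    rw [hset, measure_compl hEmeas (measure_ne_top _ _), hE1, measure_univ, tsub_self]

end NSB
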